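/- Let $u_0, v_0 \in \mathbb{R}$ and let $u_1 \leq u_0 - 3$ and $v_1 \in \mathbb{R}$ satisfy $E(u_1) \leq v_1 \leq D(u_1)$ (so $(u_1,v_1)$ is an admissible singular shock right state), where $D(u) = v_0 + u^2 + u - u_0 u - u_0$ and $E(u) = v_0 - u + u_0 u - u_0^2 + u_0$. Let $u_2 < u_1$ and set $v_2 = v_1 + (u_2 - u_1)\big(\tfrac{u_1 + u_2}{2} + \sigma\sqrt{1 - (u_1 - u_2)^2/12}\big)$ for either sign $\sigma \in \{+1, -1\}$, with $(u_1 - u_2)^2 \leq 12$ (so $(u_2,v_2)$ lies on the Hugoniot locus of $(u_1,v_1)$). Then $E(u_2) \leq v_2 \leq D(u_2)$, i.e., $(u_2, v_2)$ lies between the curves $D$ and $E$ based at $(u_0, v_0)$. -/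
import Mathlib


theorem stmt_3 (u0 v0 u1 v1 u2 v2 σ : ℝ)
    (D E : ℝ → ℝ)
    (hD : ∀ u, D u = v0 + u^2 + u - u0*u - u0)
    (hE : ∀ u, E u = v0 - u + u0*u - u0^2 + u0)
    (h1 : u1 ≤ u0 - 3) (hv1 : E u1 ≤ v1 ∧ v1 ≤ D u1)
    (h2 : u2 < u1) (hσ : σ = 1 ∨ σ = -1)
    (h12 : (u1 - u2)^2 ≤ 12)
    (hv2 : v2 = v1 + (u2 - u1) * ((u1 + u2)/2 + σ * Real.sqrt (1 - (u1 - u2)^2/12))) :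
    E u2 ≤ v2 ∧ v2 ≤ D u2 := by
  set s := Real.sqrt (1 - (u1 - u2)^2/12) with hs
  have hs0 : 0 ≤ s := Real.sqrt_nonneg _
  have hs1 : s ≤ 1 := by
    rw [hs]
    exact Real.sqrt_le_one.mpr (by nlinarith [sq_nonneg (u1 - u2)])
  have hσs : -1 ≤ σ * s ∧ σ * s ≤ 1 := by
    rcases hσ with h | h <;> rw [h] <;> constructor <;> nlinarith
  have hd : 0 < u1 - u2 := by linarith
  obtain ⟨hE1, hD1⟩ := hv1
  rw [hE u1] at hE1
  rw [hD u1] at hD1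
  constructor
  · rw [hE u2]
    have key : (u1 + u2)/2 + σ * s ≤ u0 - 1 := by linarith [hσs.2]
    nlinarith [mul_le_mul_of_nonneg_left key (le_of_lt hd)]
  · rw [hD u2]
    have key2 : (u1 + u2) + 1 - u0 ≤ (u1 + u2)/2 + σ * s := by linarith [hσs.1]
    nlinarith [mul_le_mul_of_nonneg_left key2 (le_of_lt hd)]
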